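/- arXiv:2511.02984 — 2 statements merged into one kernel-verified Lean document; each statement's English description precedes it below -/
import Mathlib

section
/- In a cOMARS design built from two parent DSDs that are foldovers of n×m conference designs, the absolute correlation between two two-factor interaction columns that share a factor (columns for pairs {i,j} and {i,k} with j ≠ k) takes one of exactly two values: 1/(n−2) or 0. -/
/-!
Foldover makes every even function of a run count twice, and the centre runs contribute nothing,
so all sums over the cOMARS design reduce to sums over the two conference designs. There, off the
zero of each column every entry squares to 1. Hence both interaction columns have zero sum (by
orthogonality) and squared norm `4 (n - 2)` (only the zero rows of the two factors drop out),
while their inner product is `Σ_t 2 Σ_a C_t[a,i]² C_t[a,j] C_t[a,k] = -2 Σ_t C_t[r_t,j] C_t[r_t,k]`,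
with `r_t` the zero row of factor `i` in `C_t`: orthogonality of columns `j, k` leaves only the
missing row-`r_t` term, which is `±1`. The correlation is therefore `±(e₁ + e₂) / (2 (n - 2))`
with `e₁, e₂ = ±1`.
-/

open Finset Filter

/-- A conference design: mutually orthogonal columns, exactly one zero per column,
at most one zero per row, and ±1 entries elsewhere. -/
def IsConferenceDesign {n m : ℕ} (C : Matrix (Fin n) (Fin m) ℝ) : Prop :=
  (∀ i j : Fin m, i ≠ j → ∑ r, C r i * C r j = 0) ∧
  (∀ j : Fin m, ∃! r : Fin n, C r j = 0) ∧
  (∀ r : Fin n, ∀ i j : Fin m, C r i = 0 → C r j = 0 → i = j) ∧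
  (∀ r : Fin n, ∀ j : Fin m, C r j = 0 ∨ C r j = 1 ∨ C r j = -1)

/-- The foldover [C; -C] of a matrix C. -/
def foldover {n m : ℕ} (C : Matrix (Fin n) (Fin m) ℝ) :
    Matrix (Fin n ⊕ Fin n) (Fin m) ℝ :=
  fun r j => match r with
    | .inl a => C a j
    | .inr a => -C a j

/-- A cOMARS design: two stacked parent DSDs (foldovers) plus n₀ center runs. -/
def cOMARS {n m : ℕ} (C₁ C₂ : Matrix (Fin n) (Fin m) ℝ) (n₀ : ℕ) :
    Matrix (((Fin n ⊕ Fin n) ⊕ (Fin n ⊕ Fin n)) ⊕ Fin n₀) (Fin m) ℝ :=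
  fun r j => match r with
    | .inl (.inl a) => foldover C₁ a j
    | .inl (.inr a) => foldover C₂ a j
    | .inr _ => 0

/-- Pearson correlation of two columns of a model matrix. -/
noncomputable def pearson {ι : Type*} [Fintype ι] (u v : ι → ℝ) : ℝ :=
  (∑ r, u r * v r - (∑ r, u r) * (∑ r, v r) / (Fintype.card ι)) /
    (Real.sqrt (∑ r, u r ^ 2 - (∑ r, u r) ^ 2 / (Fintype.card ι)) *
     Real.sqrt (∑ r, v r ^ 2 - (∑ r, v r) ^ 2 / (Fintype.card ι)))

namespace IsConferenceDesign

variable {n m : ℕ} {C : Matrix (Fin n) (Fin m) ℝ}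

theorem eq_of_apply_eq_zero (h : IsConferenceDesign C) {p : Fin m} {r s : Fin n}
    (hr : C r p = 0) (hs : C s p = 0) : r = s :=
  (h.2.1 p).unique hr hs

theorem apply_ne_zero (h : IsConferenceDesign C) {r : Fin n} {i j : Fin m}
    (hr : C r i = 0) (hij : i ≠ j) : C r j ≠ 0 :=
  fun hj => hij (h.2.2.1 r i j hr hj)

theorem sq_eq_one_sub_ite (h : IsConferenceDesign C) {p : Fin m} {r : Fin n}
    (hr : C r p = 0) (a : Fin n) : C a p ^ 2 = 1 - if a = r then 1 else 0 := by
  split_ifs with ha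
  · simp [ha, hr]
  · rcases h.2.2.2 a p with h0 | h1 | h1
    · exact absurd (h.eq_of_apply_eq_zero h0 hr) ha
    all_goals simp [h1]

theorem sum_mul_sq (h : IsConferenceDesign C) {p q : Fin m} (hpq : p ≠ q) :
    ∑ a, (C a p * C a q) ^ 2 = (n : ℝ) - 2 := by
  obtain ⟨rp, hp, -⟩ := h.2.1 p
  obtain ⟨rq, hq, -⟩ := h.2.1 q
  have hne : rp ≠ rq := fun he => h.apply_ne_zero hp hpq (he ▸ hq)
  simp [mul_pow, h.sq_eq_one_sub_ite hp, h.sq_eq_one_sub_ite hq, mul_sub, sum_sub_distrib,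
    hne.symm]
  ring

theorem sum_sq_mul_mul (h : IsConferenceDesign C) {i j k : Fin m} (hjk : j ≠ k) {r : Fin n}
    (hr : C r i = 0) :
    ∑ a, (C a i * C a j) * (C a i * C a k) = -(C r j * C r k) := by
  have hrow : ∀ a, (C a i * C a j) * (C a i * C a k)
      = C a j * C a k - if a = r then C a j * C a k else 0 := by
    intro a
    rw [show (C a i * C a j) * (C a i * C a k) = C a i ^ 2 * (C a j * C a k) by ring,
      h.sq_eq_one_sub_ite hr]
    split_ifs <;> ring
  simp only [hrow, sum_sub_distrib, h.1 j k hjk, sum_ite_eq', mem_univ, if_true, zero_sub]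

theorem mul_eq_one_or_eq_neg_one (h : IsConferenceDesign C) {r : Fin n} {j k : Fin m}
    (hj : C r j ≠ 0) (hk : C r k ≠ 0) : C r j * C r k = 1 ∨ C r j * C r k = -1 := by
  rcases h.2.2.2 r j with h1 | h1 | h1 <;> rcases h.2.2.2 r k with h2 | h2 | h2 <;>
    simp_all

end IsConferenceDesign

theorem sum_foldover {n m : ℕ} (C : Matrix (Fin n) (Fin m) ℝ) (F : (Fin m → ℝ) → ℝ)
    (hF : ∀ x, F (-x) = F x) : ∑ r, F (foldover C r) = 2 * ∑ a, F (C a) := by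
  rw [Fintype.sum_sum_type]
  change ∑ a, F (C a) + ∑ a, F (-C a) = _
  simp only [hF]
  ring

theorem sum_cOMARS {n m n₀ : ℕ} (C₁ C₂ : Matrix (Fin n) (Fin m) ℝ) (F : (Fin m → ℝ) → ℝ)
    (hF₀ : F 0 = 0) (hF : ∀ x, F (-x) = F x) :
    ∑ r, F (cOMARS C₁ C₂ n₀ r) = 2 * ∑ a, F (C₁ a) + 2 * ∑ a, F (C₂ a) := by
  rw [Fintype.sum_sum_type, Fintype.sum_sum_type]
  change ∑ a, F (foldover C₁ a) + ∑ a, F (foldover C₂ a) + ∑ _ : Fin n₀, F 0 = _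
  simp only [sum_foldover _ F hF, hF₀, sum_const_zero, add_zero]

theorem pearson_of_sum_eq_zero {ι : Type*} [Fintype ι] {u v : ι → ℝ}
    (hu : ∑ r, u r = 0) (hv : ∑ r, v r = 0) :
    pearson u v = (∑ r, u r * v r) / (√(∑ r, u r ^ 2) * √(∑ r, v r ^ 2)) := by
  simp [pearson, hu, hv]

theorem abs_add_div_eq_one_div_or_eq_zero {e₁ e₂ d : ℝ} (he₁ : e₁ = 1 ∨ e₁ = -1)
    (he₂ : e₂ = 1 ∨ e₂ = -1) (hd : 0 ≤ d) :
    |(e₁ + e₂) / (2 * d)| = 1 / d ∨ |(e₁ + e₂) / (2 * d)| = 0 := by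
  rcases he₁ with rfl | rfl <;> rcases he₂ with rfl | rfl
  · left
    rw [show ((1 : ℝ) + 1) / (2 * d) = 1 / d by ring, abs_of_nonneg (by positivity)]
  · simp
  · simp
  · left
    rw [show ((-1 : ℝ) + -1) / (2 * d) = -(1 / d) by ring, abs_neg,
      abs_of_nonneg (by positivity)]

theorem stmt_11 {n m n₀ : ℕ} (C₁ C₂ : Matrix (Fin n) (Fin m) ℝ)
    (h₁ : IsConferenceDesign C₁) (h₂ : IsConferenceDesign C₂)
    (i j k : Fin m) (hij : i ≠ j) (hik : i ≠ k) (hjk : j ≠ k) :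
    |pearson (fun r => cOMARS C₁ C₂ n₀ r i * cOMARS C₁ C₂ n₀ r j)
        (fun r => cOMARS C₁ C₂ n₀ r i * cOMARS C₁ C₂ n₀ r k)| = 1 / ((n : ℝ) - 2) ∨
    |pearson (fun r => cOMARS C₁ C₂ n₀ r i * cOMARS C₁ C₂ n₀ r j)
        (fun r => cOMARS C₁ C₂ n₀ r i * cOMARS C₁ C₂ n₀ r k)| = 0 := by
  have hsum (p q : Fin m) (hpq : p ≠ q) :
      ∑ r, cOMARS C₁ C₂ n₀ r p * cOMARS C₁ C₂ n₀ r q = 0 := by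
    simpa [h₁.1 p q hpq, h₂.1 p q hpq] using
      sum_cOMARS (n₀ := n₀) C₁ C₂ (fun x => x p * x q) (by simp) (fun x => by simp)
  have hsq (q : Fin m) (hiq : i ≠ q) :
      ∑ r, (cOMARS C₁ C₂ n₀ r i * cOMARS C₁ C₂ n₀ r q) ^ 2 = 4 * ((n : ℝ) - 2) := by
    have := sum_cOMARS (n₀ := n₀) C₁ C₂ (fun x => (x i * x q) ^ 2) (by simp) (fun x => by simp)
    rw [this, h₁.sum_mul_sq hiq, h₂.sum_mul_sq hiq]
    ring
  obtain ⟨r₁, hr₁, -⟩ := h₁.2.1 i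
  obtain ⟨r₂, hr₂, -⟩ := h₂.2.1 i
  have hcross : ∑ r, (cOMARS C₁ C₂ n₀ r i * cOMARS C₁ C₂ n₀ r j) *
      (cOMARS C₁ C₂ n₀ r i * cOMARS C₁ C₂ n₀ r k) =
        2 * -(C₁ r₁ j * C₁ r₁ k) + 2 * -(C₂ r₂ j * C₂ r₂ k) := by
    have := sum_cOMARS (n₀ := n₀) C₁ C₂ (fun x => (x i * x j) * (x i * x k)) (by simp)
      (fun x => by simp)
    rw [this, h₁.sum_sq_mul_mul hjk hr₁, h₂.sum_sq_mul_mul hjk hr₂]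
  have hd : 0 ≤ (n : ℝ) - 2 := h₁.sum_mul_sq hij ▸ sum_nonneg fun _ _ => sq_nonneg _
  rw [pearson_of_sum_eq_zero (hsum i j hij) (hsum i k hik), hcross, hsq j hij, hsq k hik,
    Real.mul_self_sqrt (by positivity),
    show ∀ a b d : ℝ, (2 * -a + 2 * -b) / (4 * d) = -((a + b) / (2 * d)) by intros; ring, abs_neg]
  exact abs_add_div_eq_one_div_or_eq_zero
    (h₁.mul_eq_one_or_eq_neg_one (h₁.apply_ne_zero hr₁ hij) (h₁.apply_ne_zero hr₁ hik))
    (h₂.mul_eq_one_or_eq_neg_one (h₂.apply_ne_zero hr₂ hij) (h₂.apply_ne_zero hr₂ hik)) hd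
end

section
/- Let a cOMARS design be constructed by concatenating two parent DSDs, each with 2n runs obtained by folding over an n×m conference design, where n ≡ 2 (mod 4). Then for any four distinct columns, the J4-characteristic belongs to the set {16λ : λ = 0, 1, …, (n−6)/4} ∪ {4n − 16(λ+1) : λ = 0, 1, …, (n−6)/4}. -/
open Finset Filter

/-!
For a row of a conference design let `x` be its entries in four distinct columns: they lie in
`{0, ±1}` with at most one zero, i.e. `3 ≤ ∑ x²`. A check of the finitely many cases gives
`|∏ x| ≤ ∑ x² - 3` and `∏ x - e₂(x) + 1 + 2 ∑ x² ≡ 0 (mod 4)`, where `e₂` is the sum of the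
six pairwise products. Summed over the rows, orthogonality kills `e₂` and every column has
`n - 1` nonzero entries, so the fourfold column sum `S` satisfies `S ≡ -n (mod 4)` and
`|S| ≤ n - 4`. Folding over doubles `S`, so the cOMARS sum is `2 S₁ + 2 S₂`, of absolute value
at most `4n - 16` and, when `n ≡ 2 (mod 4)`, a multiple of `8`: its two residues mod `16` are
the two families.
-/

def fourColSum {ι : Type*} [Fintype ι] {m : ℕ} (X : Matrix ι (Fin m) ℝ) (i j k l : Fin m) :
    ℝ :=
  ∑ r, X r i * X r j * X r k * X r l

section FourColSum

variable {n m : ℕ} (i j k l : Fin m)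

theorem fourColSum_foldover (C : Matrix (Fin n) (Fin m) ℝ) :
    fourColSum (foldover C) i j k l = 2 * fourColSum C i j k l := by
  simp only [fourColSum, Fintype.sum_sum_type, foldover, two_mul]
  congr 1
  exact Finset.sum_congr rfl fun r _ => by ring

theorem fourColSum_cOMARS (C₁ C₂ : Matrix (Fin n) (Fin m) ℝ) (n₀ : ℕ) :
    fourColSum (cOMARS C₁ C₂ n₀) i j k l =
      2 * fourColSum C₁ i j k l + 2 * fourColSum C₂ i j k l := by
  rw [← fourColSum_foldover, ← fourColSum_foldover]
  simp [fourColSum, Fintype.sum_sum_type, cOMARS]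

end FourColSum

section Ternary

variable {w x y z : ℝ}

theorem abs_mul_four_le_of_ternary (hw : w = 0 ∨ w = 1 ∨ w = -1)
    (hx : x = 0 ∨ x = 1 ∨ x = -1) (hy : y = 0 ∨ y = 1 ∨ y = -1) (hz : z = 0 ∨ z = 1 ∨ z = -1)
    (h : 3 ≤ w ^ 2 + x ^ 2 + y ^ 2 + z ^ 2) :
    |w * x * y * z| ≤ w ^ 2 + x ^ 2 + y ^ 2 + z ^ 2 - 3 := by
  rcases hw with rfl | rfl | rfl <;> rcases hx with rfl | rfl | rfl <;>
    rcases hy with rfl | rfl | rfl <;> rcases hz with rfl | rfl | rfl <;> revert h <;> norm_num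

theorem mul_four_sub_pairs_mem_zmultiples_of_ternary (hw : w = 0 ∨ w = 1 ∨ w = -1)
    (hx : x = 0 ∨ x = 1 ∨ x = -1) (hy : y = 0 ∨ y = 1 ∨ y = -1) (hz : z = 0 ∨ z = 1 ∨ z = -1)
    (h : 3 ≤ w ^ 2 + x ^ 2 + y ^ 2 + z ^ 2) :
    w * x * y * z - (w * x + w * y + w * z + x * y + x * z + y * z) + 1 +
      2 * (w ^ 2 + x ^ 2 + y ^ 2 + z ^ 2) ∈ AddSubgroup.zmultiples (4 : ℝ) := by
  rw [AddSubgroup.mem_zmultiples_iff]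
  rcases hw with rfl | rfl | rfl <;> rcases hx with rfl | rfl | rfl <;>
    rcases hy with rfl | rfl | rfl <;> rcases hz with rfl | rfl | rfl <;> revert h <;> norm_num
  all_goals first | (use 1; norm_num; done) | (use 2; norm_num; done) | (use 3; norm_num)

end Ternary

namespace IsConferenceDesign

variable {n m : ℕ} {C : Matrix (Fin n) (Fin m) ℝ}

theorem sq_eq_ite (hC : IsConferenceDesign C) (r : Fin n) (a : Fin m) :
    C r a ^ 2 = if C r a = 0 then 0 else 1 := by
  rcases hC.2.2.2 r a with h | h | h <;> simp [h]

theorem sum_sq (hC : IsConferenceDesign C) (a : Fin m) : ∑ r, C r a ^ 2 = n - 1 := by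
  obtain ⟨z, hz, hzu⟩ := hC.2.1 a
  have : ∀ r, C r a ^ 2 = 1 - if r = z then 1 else 0 := fun r => by
    rw [hC.sq_eq_ite]
    by_cases hr : r = z
    · simp [hr, hz]
    · have : C r a ≠ 0 := fun h => hr (hzu r h)
      simp [hr, this]
  simp [this, Finset.sum_sub_distrib]

theorem three_le_sum_sq (hC : IsConferenceDesign C) (r : Fin n) {i j k l : Fin m}
    (hij : i ≠ j) (hik : i ≠ k) (hil : i ≠ l) (hjk : j ≠ k) (hjl : j ≠ l) (hkl : k ≠ l) :
    3 ≤ C r i ^ 2 + C r j ^ 2 + C r k ^ 2 + C r l ^ 2 := by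
  have hpair : ∀ a b, a ≠ b → 1 ≤ C r a ^ 2 + C r b ^ 2 := fun a b hab => by
    rw [hC.sq_eq_ite, hC.sq_eq_ite]
    split_ifs with ha hb <;> norm_num
    exact hab (hC.2.2.1 r a b ha hb)
  have h01 : ∀ a, C r a ^ 2 = 0 ∨ C r a ^ 2 = 1 := fun a => by
    rw [hC.sq_eq_ite]; split_ifs <;> simp
  rcases h01 i with hi | hi <;> rcases h01 j with hj | hj <;> rcases h01 k with hk | hk <;>
    rcases h01 l with hl | hl <;>
    linarith [hpair i j hij, hpair i k hik, hpair i l hil, hpair j k hjk, hpair j l hjl,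
      hpair k l hkl]

theorem abs_fourColSum_le (hC : IsConferenceDesign C) {i j k l : Fin m}
    (hij : i ≠ j) (hik : i ≠ k) (hil : i ≠ l) (hjk : j ≠ k) (hjl : j ≠ l) (hkl : k ≠ l) :
    |fourColSum C i j k l| ≤ n - 4 := by
  have hrow := fun r => abs_mul_four_le_of_ternary (hC.2.2.2 r i) (hC.2.2.2 r j) (hC.2.2.2 r k)
    (hC.2.2.2 r l) (hC.three_le_sum_sq r hij hik hil hjk hjl hkl)
  calc |fourColSum C i j k l| ≤ ∑ r, |C r i * C r j * C r k * C r l| := abs_sum_le_sum_abs _ _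
    _ ≤ ∑ r, (C r i ^ 2 + C r j ^ 2 + C r k ^ 2 + C r l ^ 2 - 3) := sum_le_sum fun r _ => hrow r
    _ = n - 4 := by
      simp only [sum_sub_distrib, sum_add_distrib, hC.sum_sq, sum_const, card_univ,
        Fintype.card_fin, nsmul_eq_mul]
      ring

theorem exists_fourColSum_eq (hC : IsConferenceDesign C) {i j k l : Fin m}
    (hij : i ≠ j) (hik : i ≠ k) (hil : i ≠ l) (hjk : j ≠ k) (hjl : j ≠ l) (hkl : k ≠ l) :
    ∃ t : ℤ, fourColSum C i j k l = 4 * t - n := by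
  have hmem := AddSubgroup.sum_mem _ fun r (_ : r ∈ univ) =>
    mul_four_sub_pairs_mem_zmultiples_of_ternary (hC.2.2.2 r i) (hC.2.2.2 r j) (hC.2.2.2 r k)
      (hC.2.2.2 r l) (hC.three_le_sum_sq r hij hik hil hjk hjl hkl)
  obtain ⟨t, ht⟩ := AddSubgroup.mem_zmultiples_iff.mp hmem
  refine ⟨t - 2 * n + 2, ?_⟩
  simp only [sum_add_distrib, sum_sub_distrib, ← mul_sum, hC.sum_sq, hC.1 _ _ hij, hC.1 _ _ hik,
    hC.1 _ _ hil, hC.1 _ _ hjk, hC.1 _ _ hjl, hC.1 _ _ hkl, sum_const, card_univ, Fintype.card_fin,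
    nsmul_eq_mul, zsmul_eq_mul] at ht
  rw [fourColSum]
  push_cast
  linarith

end IsConferenceDesign

theorem exists_abs_eq_of_eight_dvd {n : ℕ} (hn : n % 4 = 2) {J : ℤ} (h8 : 8 ∣ J)
    (hJ : |J| + 16 ≤ 4 * n) :
    ∃ lam : ℕ, lam ≤ (n - 6) / 4 ∧
      (|(J : ℝ)| = 16 * (lam : ℝ) ∨
        |(J : ℝ)| = 4 * (n : ℝ) - 16 * ((lam : ℝ) + 1)) := by
  rw [← Int.natCast_natAbs] at hJ
  rw [← Int.cast_abs, ← Int.natCast_natAbs, Int.cast_natCast]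
  rcases (by omega : J.natAbs % 16 = 0 ∨ J.natAbs % 16 = 8) with h | h
  · refine ⟨J.natAbs / 16, by omega, Or.inl ?_⟩
    exact_mod_cast (by omega : J.natAbs = 16 * (J.natAbs / 16))
  · refine ⟨(4 * n - 16 - J.natAbs) / 16, by omega, Or.inr ?_⟩
    have : J.natAbs + 16 * ((4 * n - 16 - J.natAbs) / 16 + 1) = 4 * n := by omega
    rw [eq_sub_iff_add_eq]
    exact_mod_cast this

theorem stmt_13 {n m n₀ : ℕ} (C₁ C₂ : Matrix (Fin n) (Fin m) ℝ)
    (h₁ : IsConferenceDesign C₁) (h₂ : IsConferenceDesign C₂)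
    (hn4 : n % 4 = 2)
    (i j k l : Fin m) (hij : i ≠ j) (hik : i ≠ k) (hil : i ≠ l)
    (hjk : j ≠ k) (hjl : j ≠ l) (hkl : k ≠ l) :
    ∃ lam : ℕ, lam ≤ (n - 6) / 4 ∧
      (|∑ r, cOMARS C₁ C₂ n₀ r i * cOMARS C₁ C₂ n₀ r j *
          cOMARS C₁ C₂ n₀ r k * cOMARS C₁ C₂ n₀ r l| = 16 * (lam : ℝ) ∨
       |∑ r, cOMARS C₁ C₂ n₀ r i * cOMARS C₁ C₂ n₀ r j *
          cOMARS C₁ C₂ n₀ r k * cOMARS C₁ C₂ n₀ r l|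
         = 4 * (n : ℝ) - 16 * ((lam : ℝ) + 1)) := by
  obtain ⟨t₁, ht₁⟩ := h₁.exists_fourColSum_eq hij hik hil hjk hjl hkl
  obtain ⟨t₂, ht₂⟩ := h₂.exists_fourColSum_eq hij hik hil hjk hjl hkl
  have hJ : fourColSum (cOMARS C₁ C₂ n₀) i j k l =
      ((8 * (t₁ + t₂) - 4 * n : ℤ) : ℝ) := by
    rw [fourColSum_cOMARS, ht₁, ht₂]
    push_cast
    ring
  have hbound : |((8 * (t₁ + t₂) - 4 * n : ℤ) : ℝ)| + 16 ≤ 4 * n := by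
    rw [← hJ, fourColSum_cOMARS]
    have hS₁ := h₁.abs_fourColSum_le hij hik hil hjk hjl hkl
    have hS₂ := h₂.abs_fourColSum_le hij hik hil hjk hjl hkl
    have htri := abs_add_le (2 * fourColSum C₁ i j k l) (2 * fourColSum C₂ i j k l)
    rw [abs_mul, abs_mul, abs_two] at htri
    linarith
  rw [← fourColSum.eq_1, hJ]
  exact exists_abs_eq_of_eight_dvd hn4 (by omega) (by exact_mod_cast hbound)
end
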